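/- arXiv:2307.13097 — 2 statements merged into one kernel-verified Lean document; each statement's English description precedes it below -/
import Mathlib

section
/- Let q ≤ 2 be a real number and let Y be a positive definite n×n complex matrix. Then Tr(Y) is the maximum, over all positive definite n×n complex matrices X, of the expression Tr(X) − Tr( X^{2−q} ( log_q(X) − log_q(Y) ) ); that is, for every positive definite X one has Tr(X) − Tr( X^{2−q}( log_q(X) − log_q(Y) ) ) ≤ Tr(Y), with equality when X = Y. -/
/-! Diagonalize `X = ∑ aᵢ uᵢuᵢ*` and `Y = ∑ bⱼ vⱼvⱼ*`. Every trace in the expression is a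
sum `∑ᵢⱼ wᵢⱼ F(aᵢ, bⱼ)` with the doubly stochastic weights `wᵢⱼ = |⟪uᵢ, vⱼ⟫|²`, so the claim
reduces to the scalar inequality `a^(2-q) (log_q b - log_q a) ≤ b - a` for `a, b > 0`.
Since `log_q b - log_q a = a^(q-1) log_q (b/a)`, this is `log_q t ≤ t - 1` at `t = b/a`: for
`q ≤ 2` the deformed logarithm is concave and `t - 1` is its tangent at `1`. -/

open Matrix ComplexOrder

/-- Functional calculus for Hermitian complex matrices: apply `f` to the eigenvalues.
(For non-Hermitian input we return `0`; all matrices considered below are Hermitian.) -/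
noncomputable def mfun {n : ℕ} (f : ℝ → ℝ) (A : Matrix (Fin n) (Fin n) ℂ) :
    Matrix (Fin n) (Fin n) ℂ :=
  if hA : A.IsHermitian then
    (hA.eigenvectorUnitary : Matrix (Fin n) (Fin n) ℂ) *
      Matrix.diagonal (fun i => (f (hA.eigenvalues i) : ℂ)) *
      (hA.eigenvectorUnitary : Matrix (Fin n) (Fin n) ℂ)ᴴ
  else 0

/-- Real matrix power `A^r` of a Hermitian matrix, via functional calculus
(`t ↦ t ^ r` is the real power, with the convention `0 ^ r = 0` for `r ≠ 0`). -/
noncomputable def mpow {n : ℕ} (A : Matrix (Fin n) (Fin n) ℂ) (r : ℝ) :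
    Matrix (Fin n) (Fin n) ℂ :=
  mfun (fun t => t ^ r) A


/-- The deformed (r-)logarithm: `log_r x = (x^(r-1) - 1)/(r-1)` for `r ≠ 1`,
and the natural logarithm for `r = 1`. -/
noncomputable def dlog (r x : ℝ) : ℝ :=
  if r = 1 then Real.log x else (x ^ (r - 1) - 1) / (r - 1)

/-- The matrix deformed logarithm of a Hermitian matrix, via functional calculus. -/
noncomputable def mlog {n : ℕ} (r : ℝ) (A : Matrix (Fin n) (Fin n) ℂ) :
    Matrix (Fin n) (Fin n) ℂ :=
  mfun (dlog r) A

lemma dlog_le_sub_one {q t : ℝ} (hq : q ≤ 2) (ht : 0 < t) : dlog q t ≤ t - 1 := by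
  unfold dlog
  split_ifs with h1
  · exact Real.log_le_sub_one_of_pos ht
  rcases lt_or_gt_of_ne (sub_ne_zero.mpr h1) with hneg | hpos
  · rw [div_le_iff_of_neg hneg]
    have hexp : 1 + (q - 1) * Real.log t ≤ t ^ (q - 1) := by
      rw [Real.rpow_def_of_pos ht, mul_comm]
      linarith [Real.add_one_le_exp (Real.log t * (q - 1))]
    nlinarith [Real.log_le_sub_one_of_pos ht]
  · rw [div_le_iff₀ hpos]
    have h := rpow_one_add_le_one_add_mul_self (s := t - 1) (by linarith) hpos.le (by linarith)
    rw [add_sub_cancel] at h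
    linarith

lemma dlog_sub_dlog (q : ℝ) {a b : ℝ} (ha : 0 < a) (hb : 0 < b) :
    dlog q b - dlog q a = a ^ (q - 1) * dlog q (b / a) := by
  unfold dlog
  split_ifs with h1
  · simp [h1, Real.log_div hb.ne' ha.ne']
  · rw [Real.div_rpow hb.le ha.le]
    have : a ^ (q - 1) ≠ 0 := (Real.rpow_pos_of_pos ha _).ne'
    field_simp
    ring

lemma rpow_two_sub_mul_dlog_sub_dlog_le {q a b : ℝ} (hq : q ≤ 2) (ha : 0 < a) (hb : 0 < b) :
    a ^ (2 - q) * (dlog q b - dlog q a) ≤ b - a := by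
  have hexp : a ^ (2 - q) * a ^ (q - 1) = a := by
    rw [← Real.rpow_add ha]; norm_num
  calc a ^ (2 - q) * (dlog q b - dlog q a) = a * dlog q (b / a) := by
        rw [dlog_sub_dlog q ha hb, ← mul_assoc, hexp]
    _ ≤ a * (b / a - 1) := mul_le_mul_of_nonneg_left (dlog_le_sub_one hq (div_pos hb ha)) ha.le
    _ = b - a := by field_simp

lemma sum_add_sum_sum_mul_le_of_mem_doublyStochastic {ι : Type*} [Fintype ι] [DecidableEq ι]
    {w : Matrix ι ι ℝ} (hw : w ∈ doublyStochastic ℝ ι) {φ ψ : ι → ℝ} {K : ι → ι → ℝ}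
    (h : ∀ i j, φ i + K i j ≤ ψ j) :
    ∑ i, φ i + ∑ i, ∑ j, w i j * K i j ≤ ∑ j, ψ j :=
  calc ∑ i, φ i + ∑ i, ∑ j, w i j * K i j = ∑ i, ∑ j, w i j * (φ i + K i j) := by
        simp only [mul_add, Finset.sum_add_distrib, ← Finset.sum_mul,
          sum_row_of_mem_doublyStochastic hw, one_mul]
    _ ≤ ∑ i, ∑ j, w i j * ψ j := by
        gcongr with i _ j _
        · exact nonneg_of_mem_doublyStochastic hw
        · exact h i j
    _ = ∑ j, ψ j := by
        rw [Finset.sum_comm]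
        simp only [← Finset.sum_mul, sum_col_of_mem_doublyStochastic hw, one_mul]

namespace Matrix

variable {n : Type*} [Fintype n] [DecidableEq n]

lemma normSq_mem_doublyStochastic {U : Matrix n n ℂ} (hU : U ∈ unitaryGroup n ℂ) :
    of (fun i j => Complex.normSq (U i j)) ∈ doublyStochastic ℝ n := by
  refine mem_doublyStochastic_iff_sum.mpr ⟨fun _ _ => Complex.normSq_nonneg _, fun i => ?_,
    fun j => ?_⟩
  · have h := congrFun (congrFun (mem_unitaryGroup_iff.mp hU) i) i
    simp only [mul_apply, star_apply, RCLike.star_def, Complex.mul_conj, one_apply_eq] at h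
    simp only [of_apply]
    exact_mod_cast h
  · have h := congrFun (congrFun (mem_unitaryGroup_iff'.mp hU) j) j
    simp only [mul_apply, star_apply, RCLike.star_def, ← Complex.normSq_eq_conj_mul_self,
      one_apply_eq] at h
    simp only [of_apply]
    exact_mod_cast h

lemma trace_diagonal_mul_mul_diagonal_mul_conjTranspose (d e : n → ℂ) (W : Matrix n n ℂ) :
    (diagonal d * W * diagonal e * Wᴴ).trace =
      ∑ i, ∑ j, (Complex.normSq (W i j) : ℂ) * (d i * e j) := by
  simp only [trace, diag, mul_apply (M := diagonal d * W * diagonal e)]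
  simp only [mul_diagonal, diagonal_mul, conjTranspose_apply]
  refine Finset.sum_congr rfl fun i _ => Finset.sum_congr rfl fun j _ => ?_
  rw [Complex.normSq_eq_conj_mul_self, RCLike.star_def]
  ring

lemma trace_conjStarAlgAut (U : unitaryGroup n ℂ) (D : Matrix n n ℂ) :
    (Unitary.conjStarAlgAut ℂ _ U D).trace = D.trace := by
  rw [Unitary.conjStarAlgAut_apply, trace_mul_cycle, Unitary.star_mul_self_of_mem U.2, one_mul]

end Matrix

namespace Matrix.IsHermitian

variable {n : Type*} [Fintype n] [DecidableEq n] {A B : Matrix n n ℂ}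

noncomputable def eigenbasisOverlap (hA : A.IsHermitian) (hB : B.IsHermitian) :
    unitaryGroup n ℂ :=
  star hA.eigenvectorUnitary * hB.eigenvectorUnitary

end Matrix.IsHermitian

section FunctionalCalculus

variable {n : ℕ} {A B : Matrix (Fin n) (Fin n) ℂ}

lemma mfun_eq_conjStarAlgAut (hA : A.IsHermitian) (f : ℝ → ℝ) :
    mfun f A = Unitary.conjStarAlgAut ℂ _ hA.eigenvectorUnitary
      (diagonal fun i => (f (hA.eigenvalues i) : ℂ)) := by
  rw [mfun, dif_pos hA, Unitary.conjStarAlgAut_apply, star_eq_conjTranspose]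

lemma trace_mfun (hA : A.IsHermitian) (f : ℝ → ℝ) :
    (mfun f A).trace = ∑ i, (f (hA.eigenvalues i) : ℂ) := by
  rw [mfun_eq_conjStarAlgAut hA, trace_conjStarAlgAut, trace_diagonal]

lemma mfun_mul_mfun (hA : A.IsHermitian) (f g : ℝ → ℝ) :
    mfun f A * mfun g A = mfun (fun t => f t * g t) A := by
  simp only [mfun_eq_conjStarAlgAut hA, ← map_mul, diagonal_mul_diagonal, Complex.ofReal_mul]

lemma trace_mfun_mul_mfun (hA : A.IsHermitian) (hB : B.IsHermitian) (f g : ℝ → ℝ) :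
    (mfun f A * mfun g B).trace = ∑ i, ∑ j,
      (Complex.normSq ((hA.eigenbasisOverlap hB : Matrix (Fin n) (Fin n) ℂ) i j) : ℂ) *
        ((f (hA.eigenvalues i) : ℂ) * g (hB.eigenvalues j)) := by
  have hV : hB.eigenvectorUnitary = hA.eigenvectorUnitary * hA.eigenbasisOverlap hB := by
    rw [IsHermitian.eigenbasisOverlap, ← mul_assoc, Unitary.mul_star_self, one_mul]
  rw [mfun_eq_conjStarAlgAut hA, mfun_eq_conjStarAlgAut hB, hV, map_mul,
    StarAlgEquiv.mul_apply, ← map_mul, trace_conjStarAlgAut, Unitary.conjStarAlgAut_apply,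
    ← Matrix.mul_assoc, ← Matrix.mul_assoc, star_eq_conjTranspose,
    trace_diagonal_mul_mul_diagonal_mul_conjTranspose]

end FunctionalCalculus

/-- Variational expression for the trace, `q ≤ 2`:  for positive definite `Y`,
`Tr Y = max_{X > 0} { Tr X - Tr( X^(2-q) (log_q X - log_q Y) ) }`; i.e. for every
positive definite `X` the expression is `≤ Tr Y` (as complex numbers in the complex
order, so both sides are real), with equality when `X = Y`. -/
theorem trace_eq_max_of_le_two {n : ℕ} (q : ℝ) (hq : q ≤ 2)
    (Y : Matrix (Fin n) (Fin n) ℂ) (hY : Y.PosDef) :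
    (∀ X : Matrix (Fin n) (Fin n) ℂ, X.PosDef →
        X.trace - (mpow X (2 - q) * (mlog q X - mlog q Y)).trace ≤ Y.trace) ∧
      Y.trace - (mpow Y (2 - q) * (mlog q Y - mlog q Y)).trace = Y.trace := by
  refine ⟨fun X hX => ?_, by simp⟩
  rw [mul_sub, trace_sub, mpow, mlog, mlog, mfun_mul_mfun hX.1, trace_mfun hX.1,
    trace_mfun_mul_mfun hX.1 hY.1, hX.1.trace_eq_sum_eigenvalues, hY.1.trace_eq_sum_eigenvalues]
  set a := hX.1.eigenvalues
  set b := hY.1.eigenvalues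
  have hpoint : ∀ i j,
      (a i - a i ^ (2 - q) * dlog q (a i)) + a i ^ (2 - q) * dlog q (b j) ≤ b j := fun i j => by
    linarith [rpow_two_sub_mul_dlog_sub_dlog_le hq (hX.eigenvalues_pos i) (hY.eigenvalues_pos j)]
  have hsum := sum_add_sum_sum_mul_le_of_mem_doublyStochastic
    (normSq_mem_doublyStochastic (hX.1.eigenbasisOverlap hY.1).2) hpoint
  simp only [Finset.sum_sub_distrib, of_apply] at hsum
  simp only [RCLike.ofReal_eq_complex_ofReal]
  norm_cast
  linarith
end

section
/- Fix a real exponent p and a real exponent s > 0. The following are equivalent: (i) for every dimension n, every n×n complex matrix H and every positive semidefinite n×n matrix L, the function A ↦ Tr( (L + H* A^p H)^s ) is concave on the set of positive definite n×n complex matrices; (ii) for every dimension n and every n×n complex matrix H, the function A ↦ Tr( (H* A^p H)^s ) is concave on the set of positive definite n×n complex matrices. -/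
/-!
(i) ⇒ (ii) is the case `L = 0`. Conversely, write `L = Kᴴ K` and dilate to dimension `2n`:
for `Ĥ = [[H, 0], [K, 0]]` and `Â = diag(A, 1)` one has `Ĥᴴ Â^p Ĥ = diag(L + Hᴴ A^p H, 0)`,
and since the functional calculus acts blockwise and `0^s = 0` for `s > 0`, the trace of its
`s`-th power is `Tr((L + Hᴴ A^p H)^s)`. As `A ↦ Â` is affine and preserves positive
definiteness, concavity of `Â ↦ Tr((Ĥᴴ Â^p Ĥ)^s)` in dimension `2n` gives (i).
-/

open Matrix ComplexOrder

lemma Matrix.diagonal_mul_eq_mul_diagonal_of_injective {m k α R : Type*} [Fintype m]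
    [Fintype k] [DecidableEq m] [DecidableEq k] [CommRing R] [NoZeroDivisors R] {g : α → R}
    (hg : Function.Injective g) {a : m → α} {b : k → α} {W : Matrix m k R}
    (h : diagonal (g ∘ a) * W = W * diagonal (g ∘ b)) (F : α → R) :
    diagonal (F ∘ a) * W = W * diagonal (F ∘ b) := by
  ext i j
  have hij : g (a i) * W i j = W i j * g (b j) := by simpa using congrFun₂ h i j
  rcases eq_or_ne (W i j) 0 with hW | hW
  · simp [hW]
  · have hab : a i = b j := hg (mul_right_cancel₀ hW (hij.trans (mul_comm _ _)))
    simp [hab, mul_comm]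

lemma Matrix.IsHermitian.eq_eigenvectorUnitary_mul_diagonal {𝕜 ι : Type*} [RCLike 𝕜]
    [Fintype ι] [DecidableEq ι] {A : Matrix ι ι 𝕜} (hA : A.IsHermitian) :
    A = (hA.eigenvectorUnitary : Matrix ι ι 𝕜) * diagonal (fun i => (hA.eigenvalues i : 𝕜)) *
      (hA.eigenvectorUnitary : Matrix ι ι 𝕜)ᴴ :=
  hA.spectral_theorem

lemma Matrix.isHermitian_diagonal_ofReal {𝕜 ι : Type*} [RCLike 𝕜] [DecidableEq ι] (d : ι → ℝ) :
    (diagonal fun i => (d i : 𝕜)).IsHermitian :=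
  isHermitian_diagonal_of_self_adjoint _ (funext fun _ => RCLike.conj_ofReal _)

open scoped MatrixOrder in
lemma Matrix.PosSemidef.exists_eq_conjTranspose_mul_self {𝕜 ι : Type*} [RCLike 𝕜] [Fintype ι]
    [DecidableEq ι] {L : Matrix ι ι 𝕜} (hL : L.PosSemidef) : ∃ K : Matrix ι ι 𝕜, L = Kᴴ * K :=
  CStarAlgebra.nonneg_iff_eq_star_mul_self.mp hL.nonneg

lemma Matrix.convex_setOf_posDef {𝕜 ι : Type*} [RCLike 𝕜] :
    Convex ℝ {A : Matrix ι ι 𝕜 | A.PosDef} :=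
  convex_iff_forall_pos.mpr fun _ hA _ hB _ _ ha hb _ => (hA.smul ha).add (hB.smul hb)

variable {n m k : ℕ}

section FunctionalCalculus

lemma mfun_of_isHermitian (f : ℝ → ℝ) {A : Matrix (Fin n) (Fin n) ℂ} (hA : A.IsHermitian) :
    mfun f A = (hA.eigenvectorUnitary : Matrix (Fin n) (Fin n) ℂ) *
      diagonal (fun i => (f (hA.eigenvalues i) : ℂ)) *
      (hA.eigenvectorUnitary : Matrix (Fin n) (Fin n) ℂ)ᴴ :=
  dif_pos hA

lemma mfun_isHermitian (f : ℝ → ℝ) (A : Matrix (Fin n) (Fin n) ℂ) : (mfun f A).IsHermitian := by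
  by_cases hA : A.IsHermitian
  · rw [mfun_of_isHermitian f hA]
    exact isHermitian_mul_mul_conjTranspose _ (isHermitian_diagonal_ofReal _)
  · simp [mfun, hA]

lemma mfun_unitary_mul_diagonal_mul_conjTranspose (f : ℝ → ℝ) (U : unitaryGroup (Fin n) ℂ)
    (d : Fin n → ℝ) :
    mfun f ((U : Matrix (Fin n) (Fin n) ℂ) * diagonal (fun i => (d i : ℂ)) * (U : Matrix _ _ ℂ)ᴴ) =
      (U : Matrix (Fin n) (Fin n) ℂ) * diagonal (fun i => (f (d i) : ℂ)) * (U : Matrix _ _ ℂ)ᴴ := by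
  set A := (U : Matrix (Fin n) (Fin n) ℂ) * diagonal (fun i => (d i : ℂ)) * (U : Matrix _ _ ℂ)ᴴ
  have hA : A.IsHermitian := isHermitian_mul_mul_conjTranspose _ (isHermitian_diagonal_ofReal d)
  set V := (hA.eigenvectorUnitary : Matrix (Fin n) (Fin n) ℂ)
  have hV : V * Vᴴ = 1 := by simp [V, ← star_eq_conjTranspose]
  have hV' : Vᴴ * V = 1 := by simp [V, ← star_eq_conjTranspose]
  have hU : (U : Matrix (Fin n) (Fin n) ℂ) * (U : Matrix _ _ ℂ)ᴴ = 1 := by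
    simp [← star_eq_conjTranspose]
  have hU' : (U : Matrix (Fin n) (Fin n) ℂ)ᴴ * U = 1 := by simp [← star_eq_conjTranspose]
  -- `W` intertwines the two diagonalizations, hence also their images under `f`.
  set W := Vᴴ * U
  have hcomm : diagonal ((fun x : ℝ => (x : ℂ)) ∘ hA.eigenvalues) * W =
      W * diagonal ((fun x : ℝ => (x : ℂ)) ∘ d) := by
    have hspec : V * diagonal (fun i => (hA.eigenvalues i : ℂ)) * Vᴴ = A :=
      hA.eq_eigenvectorUnitary_mul_diagonal.symm
    calc _ = Vᴴ * (V * diagonal (fun i => (hA.eigenvalues i : ℂ)) * Vᴴ) * U := by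
          simp only [W, ← Matrix.mul_assoc, hV', Matrix.one_mul]; rfl
      _ = W * diagonal ((fun x : ℝ => (x : ℂ)) ∘ d) := by
          rw [hspec]; simp only [A, W, Matrix.mul_assoc, hU', Matrix.mul_one]; rfl
  have hcommf := diagonal_mul_eq_mul_diagonal_of_injective Complex.ofReal_injective hcomm
    (fun x => (f x : ℂ))
  calc mfun f A = V * (diagonal ((fun x => (f x : ℂ)) ∘ hA.eigenvalues) * W) *
        (U : Matrix _ _ ℂ)ᴴ := by
        simp only [mfun_of_isHermitian f hA, W, Matrix.mul_assoc, hU, Matrix.mul_one]; rfl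
    _ = _ := by
        rw [hcommf]
        simp only [W, ← Matrix.mul_assoc, hV, Matrix.one_mul]; rfl

lemma mfun_diagonal (f : ℝ → ℝ) (d : Fin n → ℝ) :
    mfun f (diagonal fun i => (d i : ℂ)) = diagonal fun i => (f (d i) : ℂ) := by
  simpa using mfun_unitary_mul_diagonal_mul_conjTranspose f 1 d

lemma one_mpow (r : ℝ) : mpow (1 : Matrix (Fin n) (Fin n) ℂ) r = 1 := by
  unfold mpow
  simpa using mfun_diagonal (n := n) (fun t => t ^ r) (fun _ => 1)

lemma zero_mpow {r : ℝ} (hr : r ≠ 0) : mpow (0 : Matrix (Fin n) (Fin n) ℂ) r = 0 := by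
  unfold mpow
  simpa [Real.zero_rpow hr] using mfun_diagonal (n := n) (fun t => t ^ r) (fun _ => 0)

end FunctionalCalculus

section FromBlocksDiag

variable {α : Type*} [CommSemiring α] [StarRing α]

def fromBlocksDiag (m k : ℕ) :
    Matrix (Fin m) (Fin m) α × Matrix (Fin k) (Fin k) α →⋆ₐ[α]
      Matrix (Fin (m + k)) (Fin (m + k)) α where
  toFun XY := reindex finSumFinEquiv finSumFinEquiv (fromBlocks XY.1 0 0 XY.2)
  map_one' := by simp [fromBlocks_one]
  map_mul' _ _ := by simp [fromBlocks_multiply, submatrix_mul_equiv]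
  map_zero' := by simp
  map_add' X Y := by
    change _ = (fromBlocks X.1 0 0 X.2 + fromBlocks Y.1 0 0 Y.2).submatrix _ _
    rw [fromBlocks_add, add_zero, add_zero]
    rfl
  commutes' x := by
    have h := fromBlocks_smul x (1 : Matrix (Fin m) (Fin m) α) 0 0 (1 : Matrix (Fin k) (Fin k) α)
    simp only [smul_zero, fromBlocks_one] at h
    simp [Algebra.algebraMap_eq_smul_one, ← h, submatrix_smul]
  map_star' _ := by simp [star_eq_conjTranspose, fromBlocks_conjTranspose]

lemma fromBlocksDiag_apply (XY : Matrix (Fin m) (Fin m) α × Matrix (Fin k) (Fin k) α) :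
    fromBlocksDiag m k XY = reindex finSumFinEquiv finSumFinEquiv (fromBlocks XY.1 0 0 XY.2) :=
  rfl

lemma fromBlocksDiag_diagonal_comp {β : Type*} (g : β → α) (a : Fin m → β) (b : Fin k → β) :
    fromBlocksDiag m k (diagonal fun i => g (a i), diagonal fun i => g (b i)) =
      diagonal fun i => g (Fin.append a b i) := by
  rw [fromBlocksDiag_apply, fromBlocks_diagonal, reindex_apply, submatrix_diagonal_equiv]
  congr 1
  ext i
  refine Fin.addCases (fun i => ?_) (fun i => ?_) i <;> simp

lemma trace_fromBlocksDiag (X : Matrix (Fin m) (Fin m) α) (Y : Matrix (Fin k) (Fin k) α) :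
    (fromBlocksDiag m k (X, Y)).trace = X.trace + Y.trace := by
  simp [fromBlocksDiag_apply, trace, Fin.sum_univ_add]

lemma posDef_fromBlocksDiag {𝕜 : Type*} [RCLike 𝕜] {A : Matrix (Fin m) (Fin m) 𝕜}
    {B : Matrix (Fin k) (Fin k) 𝕜} (hA : A.PosDef) (hB : B.PosDef) :
    (fromBlocksDiag m k (A, B)).PosDef := by
  rw [fromBlocksDiag_apply, reindex_apply]
  refine PosDef.submatrix ?_ finSumFinEquiv.symm.injective
  let := hA.isUnit.invertible
  have hPSD : (fromBlocks A 0 0 B).PosSemidef := by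
    simpa using (PosDef.fromBlocks₁₁ 0 B hA).mpr (by simpa using hB.posSemidef)
  rw [hPSD.posDef_iff_det_ne_zero, det_fromBlocks_zero₂₁]
  exact mul_ne_zero hA.det_pos.ne' hB.det_pos.ne'

end FromBlocksDiag

/-- Being a unital ⋆-homomorphism, `fromBlocksDiag` turns unitary diagonalizations of `X` and `Y`
into one of `diag(X, Y)`. -/
lemma mfun_fromBlocksDiag (f : ℝ → ℝ) {X : Matrix (Fin m) (Fin m) ℂ}
    {Y : Matrix (Fin k) (Fin k) ℂ} (hX : X.IsHermitian) (hY : Y.IsHermitian) :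
    mfun f (fromBlocksDiag m k (X, Y)) = fromBlocksDiag m k (mfun f X, mfun f Y) := by
  set U := hX.eigenvectorUnitary
  set V := hY.eigenvectorUnitary
  have hUV : ((U : Matrix (Fin m) (Fin m) ℂ), (V : Matrix (Fin k) (Fin k) ℂ)) ∈
      unitary (Matrix (Fin m) (Fin m) ℂ × Matrix (Fin k) (Fin k) ℂ) :=
    Unitary.mem_iff.mpr ⟨by ext <;> simp, by ext <;> simp⟩
  let W : unitaryGroup (Fin (m + k)) ℂ := ⟨fromBlocksDiag m k (U, V), Unitary.map_mem _ hUV⟩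
  have hW : ∀ g : ℝ → ℝ,
      fromBlocksDiag m k ((U : Matrix _ _ ℂ) * diagonal (fun i => (g (hX.eigenvalues i) : ℂ)) *
          (U : Matrix _ _ ℂ)ᴴ,
        (V : Matrix _ _ ℂ) * diagonal (fun i => (g (hY.eigenvalues i) : ℂ)) * (V : Matrix _ _ ℂ)ᴴ) =
      (W : Matrix _ _ ℂ) *
        diagonal (fun i => (g (Fin.append hX.eigenvalues hY.eigenvalues i) : ℂ)) *
        (W : Matrix _ _ ℂ)ᴴ := by
    intro g
    simp only [← star_eq_conjTranspose]
    calc _ = fromBlocksDiag m k (((U : Matrix _ _ ℂ), (V : Matrix _ _ ℂ)) *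
          (diagonal _, diagonal _) * star ((U : Matrix _ _ ℂ), (V : Matrix _ _ ℂ))) := rfl
      _ = _ := by
        rw [map_mul, map_mul, map_star, fromBlocksDiag_diagonal_comp (fun x => (g x : ℂ))]
  have hXY : fromBlocksDiag m k (X, Y) = (W : Matrix _ _ ℂ) *
      diagonal (fun i => ((Fin.append hX.eigenvalues hY.eigenvalues i : ℝ) : ℂ)) *
      (W : Matrix _ _ ℂ)ᴴ := by
    rw [← hW fun t => t]
    exact congrArg _
      (Prod.ext hX.eq_eigenvectorUnitary_mul_diagonal hY.eq_eigenvectorUnitary_mul_diagonal)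
  rw [hXY, mfun_unitary_mul_diagonal_mul_conjTranspose, ← hW f, mfun_of_isHermitian f hX,
    mfun_of_isHermitian f hY]

lemma mpow_fromBlocksDiag {X : Matrix (Fin m) (Fin m) ℂ} {Y : Matrix (Fin k) (Fin k) ℂ}
    (hX : X.IsHermitian) (hY : Y.IsHermitian) (r : ℝ) :
    mpow (fromBlocksDiag m k (X, Y)) r = fromBlocksDiag m k (mpow X r, mpow Y r) :=
  mfun_fromBlocksDiag _ hX hY

section Dilation

def dilation {α : Type*} [Zero α] (H K : Matrix (Fin n) (Fin n) α) :
    Matrix (Fin (n + n)) (Fin (n + n)) α :=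
  reindex finSumFinEquiv finSumFinEquiv (fromBlocks H 0 K 0)

lemma dilation_conjTranspose_mul_fromBlocksDiag_one_mul {α : Type*} [CommRing α] [StarRing α]
    (H K M : Matrix (Fin n) (Fin n) α) :
    (dilation H K)ᴴ * fromBlocksDiag n n (M, 1) * dilation H K =
      fromBlocksDiag n n (Kᴴ * K + Hᴴ * M * H, 0) := by
  simp [dilation, fromBlocksDiag_apply, fromBlocks_conjTranspose, fromBlocks_multiply,
    submatrix_mul_equiv, conjTranspose_submatrix, add_comm]

lemma trace_mpow_dilation (p : ℝ) {s : ℝ} (hs : s ≠ 0) (H K : Matrix (Fin n) (Fin n) ℂ)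
    {A : Matrix (Fin n) (Fin n) ℂ} (hA : A.IsHermitian) :
    (mpow ((dilation H K)ᴴ * mpow (fromBlocksDiag n n (A, 1)) p * dilation H K) s).trace =
      (mpow (Kᴴ * K + Hᴴ * mpow A p * H) s).trace := by
  have hM : (Kᴴ * K + Hᴴ * mpow A p * H).IsHermitian :=
    (isHermitian_conjTranspose_mul_self K).add
      (isHermitian_conjTranspose_mul_mul H (mfun_isHermitian _ _))
  rw [mpow_fromBlocksDiag hA isHermitian_one, one_mpow,
    dilation_conjTranspose_mul_fromBlocksDiag_one_mul, mpow_fromBlocksDiag hM isHermitian_zero,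
    zero_mpow hs, trace_fromBlocksDiag, trace_zero, add_zero]

noncomputable def fromBlocksDiagOneAffineMap (n : ℕ) :
    Matrix (Fin n) (Fin n) ℂ →ᵃ[ℝ] Matrix (Fin (n + n)) (Fin (n + n)) ℂ :=
  ((fromBlocksDiag n n).toLinearMap.restrictScalars ℝ ∘ₗ LinearMap.inl ℝ _ _).toAffineMap +
    AffineMap.const ℝ _ (fromBlocksDiag n n (0, 1))

lemma fromBlocksDiagOneAffineMap_apply (A : Matrix (Fin n) (Fin n) ℂ) :
    fromBlocksDiagOneAffineMap n A = fromBlocksDiag n n (A, 1) := by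
  change fromBlocksDiag n n (A, 0) + fromBlocksDiag n n (0, 1) = _
  rw [← map_add, Prod.mk_add_mk, add_zero, zero_add]

end Dilation

/-- For fixed exponents `p` and `s > 0`, the trace function
`A ↦ Tr((L + Hᴴ A^p H)^s)` is concave on positive definite matrices for every
dimension, every `H` and every positive semidefinite `L`, if and only if this holds
with `L = 0`, i.e. `A ↦ Tr((Hᴴ A^p H)^s)` is concave for every dimension and `H`. -/
theorem concave_trace_shifted_iff (p s : ℝ) (hs : 0 < s) :
    (∀ (n : ℕ) (H L : Matrix (Fin n) (Fin n) ℂ), L.PosSemidef →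
        ConcaveOn ℝ {A : Matrix (Fin n) (Fin n) ℂ | A.PosDef}
          (fun A => (mpow (L + Hᴴ * mpow A p * H) s).trace.re)) ↔
      (∀ (n : ℕ) (H : Matrix (Fin n) (Fin n) ℂ),
        ConcaveOn ℝ {A : Matrix (Fin n) (Fin n) ℂ | A.PosDef}
          (fun A => (mpow (Hᴴ * mpow A p * H) s).trace.re)) := by
  refine ⟨fun h n H => by simpa using h n H 0 .zero, fun h n H L hL => ?_⟩
  obtain ⟨K, rfl⟩ := hL.exists_eq_conjTranspose_mul_self
  refine (((h (n + n) (dilation H K)).comp_affineMap (fromBlocksDiagOneAffineMap n)).subset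
    (fun A hA => ?_) convex_setOf_posDef).congr fun A hA => ?_
  · simpa [fromBlocksDiagOneAffineMap_apply] using posDef_fromBlocksDiag hA PosDef.one
  · simp only [Function.comp_apply, fromBlocksDiagOneAffineMap_apply]
    rw [trace_mpow_dilation p hs.ne' H K hA.isHermitian]
end
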